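/- Let b ≥ 2 and N ≥ 1 be integers and let A = (a_0, …, a_{b-1}) be a zero-sum vector of complex numbers. Define, for 0 ≤ n ≤ b^N - 1, c_n := ∑_{k ⪯ n} a_{u_b(k)}, the sum over all non-negative integers k digitally dominated by n in base b. Then: (i) ∑_{n=0}^{b^N-1} a_{u_b(n)} x^n = (∑_{n=0}^{b^N-1} c_n x^n) · ∏_{m=0}^{N-1} (1 - x^{b^m}) as polynomials; and (ii) c_n = 0 for every n whose base-b expansion contains the digit b-1. -/

import Mathlib

/-!
Index the vector `A` by `ZMod b`, so that shifting it by a digit is addition, and write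
`P_N(A) = ∑_{n<b^N} A(u_b n) X^n` and `Q_N(A) = ∑_{n<b^N} c_A(n) X^n`. Splitting off the last
base-`b` digit, `n = s + b j`, gives
`P_{N+1}(A) = ∑_{s<b} X^s P_N(A(s + ·))(X^b)`, `c_A(s + b j) = ∑_{t ≤ s} c_{A(t + ·)}(j)` and
`∏_{m ≤ N} (1 - X^{b^m}) = (1 - X) ∏_{m < N} (1 - X^{b^{m+1}})`, so (i) follows by induction on `N`
from an Abel summation whose boundary term is `∑_{t<b} P_N(A(t + ·)) = 0`, the zero-sum condition.
The same digit recursion proves (ii): at the digit equal to `b - 1` the coefficient becomes a full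
sum over the shifts of `A`.
-/

/-- `ptm b n` is the generalized Prouhet–Thue–Morse sequence `u_b(n)`: the sum of the base-`b`
digits of `n`, reduced modulo `b`. -/
def ptm (b n : ℕ) : ℕ := (Nat.digits b n).sum % b

/-- `dig b n i` is the `i`-th digit of `n` in base `b`. -/
def dig (b n i : ℕ) : ℕ := n / b ^ i % b

namespace Ptm

open Finset Polynomial

variable {b : ℕ}

section Digits

def digitSum (b n : ℕ) : ZMod b := ((Nat.digits b n).sum : ZMod b)

theorem ptm_eq_val_digitSum [NeZero b] (n : ℕ) : ptm b n = (digitSum b n).val :=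
  (ZMod.val_natCast b _).symm

@[simp] theorem digitSum_zero : digitSum b 0 = 0 := by simp [digitSum]

theorem digitSum_add_mul (hb : 1 < b) {s : ℕ} (hs : s < b) (j : ℕ) :
    digitSum b (s + b * j) = s + digitSum b j := by
  by_cases h0 : s = 0 ∧ j = 0
  · simp [h0.1, h0.2]
  · rw [digitSum, digitSum, Nat.digits_add b hb s j hs (by tauto), List.sum_cons, Nat.cast_add]

theorem add_mul_mod_of_lt {s : ℕ} (hs : s < b) (j : ℕ) : (s + b * j) % b = s := by
  rw [Nat.add_mul_mod_self_left, Nat.mod_eq_of_lt hs]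

theorem add_mul_div_of_lt {s : ℕ} (hs : s < b) (j : ℕ) : (s + b * j) / b = j := by
  rw [Nat.add_mul_div_left _ _ (by omega), Nat.div_eq_of_lt hs, zero_add]

theorem dig_zero (n : ℕ) : dig b n 0 = n % b := by simp [dig]

theorem dig_succ (n i : ℕ) : dig b n (i + 1) = dig b (n / b) i := by
  simp [dig, pow_succ', Nat.div_div_eq_div_mul]

theorem forall_dig_le_iff {k n : ℕ} :
    (∀ i, dig b k i ≤ dig b n i) ↔ k % b ≤ n % b ∧ ∀ i, dig b (k / b) i ≤ dig b (n / b) i := by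
  simp only [← dig_zero, ← dig_succ]
  exact ⟨fun h => ⟨h 0, fun i => h (i + 1)⟩, fun ⟨h0, h⟩ i => by cases i <;> simp_all⟩

theorem le_of_forall_dig_le (hb : 1 < b) {k n : ℕ} (h : ∀ i, dig b k i ≤ dig b n i) : k ≤ n := by
  induction k using Nat.strong_induction_on generalizing n with
  | _ k ih =>
    rcases Nat.eq_zero_or_pos k with rfl | hk
    · exact Nat.zero_le n
    obtain ⟨hmod, hdiv⟩ := forall_dig_le_iff.mp h
    have := Nat.mul_le_mul_left b (ih (k / b) (Nat.div_lt_self hk hb) hdiv)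
    have := Nat.div_add_mod k b
    have := Nat.div_add_mod n b
    omega

end Digits

section Domination

open Classical in
noncomputable def domSet (b n : ℕ) : Finset ℕ :=
  (range (n + 1)).filter fun k => ∀ i, dig b k i ≤ dig b n i

theorem mem_domSet (hb : 1 < b) {k n : ℕ} : k ∈ domSet b n ↔ ∀ i, dig b k i ≤ dig b n i := by
  simp only [domSet, mem_filter, mem_range, and_iff_right_iff_imp]
  exact fun h => Nat.lt_succ_of_le (le_of_forall_dig_le hb h)

theorem domSet_zero : domSet b 0 = {0} := by
  ext k
  simp +contextual [domSet]

theorem add_mul_mem_domSet_iff (hb : 1 < b) {s : ℕ} (hs : s < b) (j n : ℕ) :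
    s + b * j ∈ domSet b n ↔ s ≤ n % b ∧ j ∈ domSet b (n / b) := by
  rw [mem_domSet hb, mem_domSet hb, forall_dig_le_iff, add_mul_mod_of_lt hs, add_mul_div_of_lt hs]

theorem sum_domSet {M : Type*} [AddCommMonoid M] (hb : 1 < b) (f : ℕ → M) (n : ℕ) :
    ∑ k ∈ domSet b n, f k = ∑ s ∈ range (n % b + 1), ∑ j ∈ domSet b (n / b), f (s + b * j) := by
  have hlt : ∀ s ∈ range (n % b + 1), s < b := fun s hs =>
    (Nat.lt_succ_iff.mp (mem_range.mp hs)).trans_lt (Nat.mod_lt n (by omega))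
  rw [← sum_product']
  refine (sum_nbij' (fun p => p.1 + b * p.2) (fun k => (k % b, k / b)) ?_ ?_ ?_ ?_ ?_).symm
  · rintro ⟨s, j⟩ hsj
    obtain ⟨hs, hj⟩ := mem_product.mp hsj
    exact (add_mul_mem_domSet_iff hb (hlt s hs) j n).mpr ⟨Nat.lt_succ_iff.mp (mem_range.mp hs), hj⟩
  · intro k hk
    rw [← Nat.mod_add_div k b, add_mul_mem_domSet_iff hb (Nat.mod_lt k (by omega))] at hk
    exact mem_product.mpr ⟨mem_range.mpr (Nat.lt_succ_of_le hk.1), hk.2⟩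
  · rintro ⟨s, j⟩ hsj
    have hs := hlt s (mem_product.mp hsj).1
    rw [add_mul_mod_of_lt hs, add_mul_div_of_lt hs]
  · intro k _
    exact Nat.mod_add_div k b
  · intro _ _
    rfl

end Domination

section CoefficientVanishing

variable {M : Type*} [AddCommMonoid M]

/-- The coefficient `c_n` of the theorem, for a vector `A` indexed by `ZMod b`. -/
noncomputable def domSum (b : ℕ) (A : ZMod b → M) (n : ℕ) : M :=
  ∑ k ∈ domSet b n, A (digitSum b k)

theorem domSum_zero (A : ZMod b → M) : domSum b A 0 = A 0 := by
  simp [domSum, domSet_zero]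

theorem domSum_eq_sum_domSum_div (hb : 1 < b) (A : ZMod b → M) (n : ℕ) :
    domSum b A n = ∑ s ∈ range (n % b + 1), domSum b (fun z => A (s + z)) (n / b) := by
  rw [domSum, sum_domSet hb]
  refine sum_congr rfl fun s hs => sum_congr rfl fun j _ => ?_
  have hs : s < b := (Nat.lt_succ_iff.mp (mem_range.mp hs)).trans_lt (Nat.mod_lt n (by omega))
  rw [digitSum_add_mul hb hs]

theorem sum_range_natCast_add [NeZero b] (g : ZMod b → M) (t : ZMod b) :
    ∑ s ∈ range b, g (s + t) = ∑ z, g z := by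
  rw [← Equiv.sum_comp (Equiv.addRight t) g]
  refine sum_nbij' (fun s => (s : ZMod b)) ZMod.val ?_ ?_ ?_ ?_ ?_
  · exact fun _ _ => mem_univ _
  · exact fun z _ => mem_range.mpr (ZMod.val_lt z)
  · exact fun s hs => ZMod.val_natCast_of_lt (mem_range.mp hs)
  · exact fun z _ => ZMod.natCast_zmod_val z
  · exact fun _ _ => rfl

theorem domSum_eq_zero_of_dig_eq [NeZero b] (hb : 1 < b) {A : ZMod b → M} (hA : ∑ z, A z = 0)
    {n i : ℕ} (hi : dig b n i = b - 1) : domSum b A n = 0 := by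
  induction i generalizing n A with
  | zero =>
    rw [dig_zero] at hi
    rw [domSum_eq_sum_domSum_div hb, hi, Nat.sub_add_cancel hb.le]
    simp only [domSum]
    rw [sum_comm]
    exact sum_eq_zero fun k _ => (sum_range_natCast_add A _).trans hA
  | succ i ih =>
    rw [dig_succ] at hi
    rw [domSum_eq_sum_domSum_div hb]
    refine sum_eq_zero fun s _ => ih ?_ hi
    rw [← hA]
    exact Equiv.sum_comp (Equiv.addLeft (s : ZMod b)) A

end CoefficientVanishing

section GeneratingPolynomials

theorem sum_range_mul_eq_sum_sum {M : Type*} [AddCommMonoid M] (b L : ℕ) (f : ℕ → M) :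
    ∑ n ∈ range (b * L), f n = ∑ s ∈ range b, ∑ j ∈ range L, f (s + b * j) := by
  induction L with
  | zero => simp
  | succ L ih =>
    rw [mul_add_one, sum_range_add, ih]
    simp only [sum_range_succ, sum_add_distrib, add_comm (b * L)]

variable {R : Type*} [CommRing R]

theorem sum_range_mul_C_mul_X_pow (b L : ℕ) (f : ℕ → R) :
    ∑ n ∈ range (b * L), C (f n) * X ^ n =
      ∑ s ∈ range b, X ^ s * expand R b (∑ j ∈ range L, C (f (s + b * j)) * X ^ j) := by
  rw [sum_range_mul_eq_sum_sum]
  refine sum_congr rfl fun s _ => ?_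
  simp only [map_sum, map_mul, expand_C, map_pow, expand_X, mul_sum, pow_add, pow_mul]
  exact sum_congr rfl fun j _ => by ring

theorem prod_range_succ_one_sub_X_pow_pow (b N : ℕ) :
    ∏ m ∈ range (N + 1), (1 - X ^ b ^ m : R[X]) =
      (1 - X) * expand R b (∏ m ∈ range N, (1 - X ^ b ^ m)) := by
  rw [prod_range_succ', map_prod, mul_comm]
  simp [pow_succ', pow_mul]

theorem one_sub_mul_sum_pow_mul_partialSum_add (g : ℕ → R) (y : R) (m : ℕ) :
    (1 - y) * ∑ s ∈ range m, y ^ s * ∑ t ∈ range (s + 1), g t + y ^ m * ∑ t ∈ range m, g t =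
      ∑ s ∈ range m, y ^ s * g s := by
  induction m with
  | zero => simp
  | succ m ih =>
    simp only [sum_range_succ] at ih ⊢
    linear_combination ih

theorem one_sub_mul_sum_pow_mul_partialSum {g : ℕ → R} {m : ℕ} (hg : ∑ t ∈ range m, g t = 0)
    (y : R) :
    (1 - y) * ∑ s ∈ range m, y ^ s * ∑ t ∈ range (s + 1), g t = ∑ s ∈ range m, y ^ s * g s := by
  simpa [hg] using one_sub_mul_sum_pow_mul_partialSum_add g y m

noncomputable def digitPoly (b N : ℕ) (A : ZMod b → R) : R[X] :=
  ∑ n ∈ range (b ^ N), C (A (digitSum b n)) * X ^ n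

noncomputable def domPoly (b N : ℕ) (A : ZMod b → R) : R[X] :=
  ∑ n ∈ range (b ^ N), C (domSum b A n) * X ^ n

theorem digitPoly_succ (hb : 1 < b) (N : ℕ) (A : ZMod b → R) :
    digitPoly b (N + 1) A =
      ∑ s ∈ range b, X ^ s * expand R b (digitPoly b N fun z => A (s + z)) := by
  rw [digitPoly, pow_succ', sum_range_mul_C_mul_X_pow]
  refine sum_congr rfl fun s hs => ?_
  simp only [digitPoly, digitSum_add_mul hb (mem_range.mp hs)]

theorem domPoly_succ (hb : 1 < b) (N : ℕ) (A : ZMod b → R) :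
    domPoly b (N + 1) A =
      ∑ s ∈ range b, X ^ s * ∑ t ∈ range (s + 1), expand R b (domPoly b N fun z => A (t + z)) := by
  rw [domPoly, pow_succ', sum_range_mul_C_mul_X_pow]
  refine sum_congr rfl fun s hs => ?_
  have hs := mem_range.mp hs
  simp only [domPoly, domSum_eq_sum_domSum_div hb _ (s + b * _), add_mul_mod_of_lt hs,
    add_mul_div_of_lt hs, map_sum, sum_mul]
  rw [sum_comm]

theorem sum_digitPoly_add_left [NeZero b] {A : ZMod b → R} (hA : ∑ z, A z = 0) (N : ℕ) :
    ∑ t ∈ range b, digitPoly b N (fun z => A (t + z)) = 0 := by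
  simp only [digitPoly]
  rw [sum_comm]
  refine sum_eq_zero fun n _ => ?_
  rw [← sum_mul, ← map_sum]
  simp [sum_range_natCast_add (fun z => A z), hA]

theorem digitPoly_eq_domPoly_mul [NeZero b] (hb : 1 < b) {A : ZMod b → R} (hA : ∑ z, A z = 0)
    (N : ℕ) : digitPoly b N A = domPoly b N A * ∏ m ∈ range N, (1 - X ^ b ^ m) := by
  induction N generalizing A with
  | zero => simp [digitPoly, domPoly, domSum_zero]
  | succ N ih =>
    have hshift (t : ℕ) : ∑ z, A (t + z) = 0 :=
      (Equiv.sum_comp (Equiv.addLeft (t : ZMod b)) A).trans hA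
    have hexpand : ∑ t ∈ range b, expand R b (digitPoly b N fun z => A (t + z)) = 0 := by
      rw [← map_sum, sum_digitPoly_add_left hA, map_zero]
    calc digitPoly b (N + 1) A
        = (1 - X) * ∑ s ∈ range b, X ^ s *
            ∑ t ∈ range (s + 1), expand R b (digitPoly b N fun z => A (t + z)) := by
          rw [digitPoly_succ hb, one_sub_mul_sum_pow_mul_partialSum hexpand]
      _ = domPoly b (N + 1) A * ∏ m ∈ range (N + 1), (1 - X ^ b ^ m) := by
          simp only [ih (hshift _), map_mul, domPoly_succ hb, prod_range_succ_one_sub_X_pow_pow,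
            ← sum_mul, ← mul_assoc]
          ring

end GeneratingPolynomials

end Ptm

open Classical in
/-- For `b ≥ 2`, `N ≥ 1` and a zero-sum vector `A = (a_0, …, a_{b-1})` of complex numbers,
let `c_n := ∑_{k ⪯ n} a_{u_b(k)}` (the sum over all `k` digitally dominated by `n` in base `b`).
Then (i) `∑_{n<b^N} a_{u_b(n)} x^n = (∑_{n<b^N} c_n x^n) · ∏_{m<N} (1 - x^{b^m})` as
polynomials, and (ii) `c_n = 0` for every `n` whose base-`b` expansion contains the
digit `b-1`. -/
theorem ptm_coefficient_formula (b N : ℕ) (hb : 2 ≤ b)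
    (a : Fin b → ℂ) (ha : ∑ i, a i = 0) (c : ℕ → ℂ)
    (hc : ∀ n, c n =
      ∑ k ∈ (Finset.range (n + 1)).filter (fun k => ∀ i, dig b k i ≤ dig b n i),
        a ⟨ptm b k, Nat.mod_lt _ (by omega)⟩) :
    ((∑ n ∈ Finset.range (b ^ N),
        Polynomial.C (a ⟨ptm b n, Nat.mod_lt _ (by omega)⟩) * Polynomial.X ^ n) =
      (∑ n ∈ Finset.range (b ^ N), Polynomial.C (c n) * Polynomial.X ^ n) *
        ∏ m ∈ Finset.range N, (1 - Polynomial.X ^ b ^ m)) ∧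
    ∀ n : ℕ, (∃ i, dig b n i = b - 1) → c n = 0 := by
  have : NeZero b := ⟨by omega⟩
  let A : ZMod b → ℂ := fun z => a ⟨z.val, z.val_lt⟩
  have ha_ptm (n : ℕ) (h : ptm b n < b) : a ⟨ptm b n, h⟩ = A (Ptm.digitSum b n) := by
    simp only [A, Ptm.ptm_eq_val_digitSum]
  have hA : ∑ z, A z = 0 := by
    refine (Fintype.sum_bijective (fun z : ZMod b => (⟨z.val, z.val_lt⟩ : Fin b)) ⟨?_, ?_⟩ A a
      fun _ => rfl).trans ha
    · exact fun x y h => ZMod.val_injective b (Fin.mk.inj h)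
    · exact fun i => ⟨i.val, Fin.ext (ZMod.val_natCast_of_lt i.isLt)⟩
  have hcA : c = Ptm.domSum b A :=
    funext fun n => (hc n).trans (Finset.sum_congr rfl fun k _ => ha_ptm k _)
  refine ⟨?_, fun n ⟨i, hi⟩ => hcA ▸ Ptm.domSum_eq_zero_of_dig_eq hb hA hi⟩
  rw [hcA]
  refine (Finset.sum_congr rfl fun n _ => ?_).trans (Ptm.digitPoly_eq_domPoly_mul hb hA N)
  exact congrArg (Polynomial.C · * _) (ha_ptm n _)
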